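/- arXiv:2001.11257 — 8 statements merged into one kernel-verified Lean document; each statement's English description precedes it below -/
import Mathlib

section
/- Let σ, p, α > 0 and K ≥ 1 satisfy K·exp(−α(σ+p)) ≤ 1/4, and let τ ∈ ℝ. Suppose f : ℝ → ℝ satisfies 0 ≤ f(t) ≤ 1 for all t, and suppose that for every τ' ≤ τ and every t ≤ τ' − σ we have f(t) ≤ max( (1/2)·sup_{s ≤ τ'+p} f(s), K·sup_{s ≥ τ'+p} exp(−α(s−t))·f(s) ). Then for every m ∈ ℕ and every t ≤ τ − σ − m(σ+p) we have f(t) ≤ 2^{−(m+1)}. Consequently f(t) ≤ K̃·exp(α̃(t−τ)) for all t ≤ τ − σ, where α̃ = (log 2)/(σ+p) and K̃ = exp(α̃(σ+p)). -/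
/-!
With `L = σ + p`, show by strong induction on `n` that `f ≤ 2⁻ⁿ` on `(-∞, τ + p - nL]`.
In the step estimate at `t`, the supremum over `s ≤ t + L` lies one level lower, so halving it
gives `2⁻ⁿ`. In the weighted supremum, `s - t ∈ [kL, (k+1)L)` with `k ≥ 1` makes the weight
`K e^{-α(s-t)} ≤ (K e^{-αL})ᵏ ≤ 4⁻ᵏ`, while `s` lies only `k` levels higher, so
`f s ≤ 2^{-(n-1-k)}`: the product is again at most `2⁻ⁿ`. Choosing `n = ⌊(τ + p - t)/L⌋`
turns the staircase bound into the exponential one.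
-/

open Real Set

lemma exists_nat_mul_le_lt_succ_mul {L d : ℝ} (hL : 0 < L) (hd : 0 ≤ d) :
    ∃ k : ℕ, k * L ≤ d ∧ d < (k + 1) * L :=
  ⟨⌊d / L⌋₊, (le_div_iff₀ hL).1 (Nat.floor_le (div_nonneg hd hL.le)),
    (div_lt_iff₀ hL).1 (Nat.lt_floor_add_one _)⟩

lemma mul_sSup_le_of_forall_mul_le {S : Set ℝ} {K c : ℝ} (hK : 0 < K) (hc : 0 ≤ c)
    (h : ∀ x ∈ S, K * x ≤ c) : K * sSup S ≤ c := by
  rw [← le_div_iff₀' hK]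
  exact Real.sSup_le (fun x hx => (le_div_iff₀' hK).2 (h x hx)) (by positivity)

lemma half_pow_le_exp_log_two_div_mul {L x : ℝ} {n : ℕ} (hL : 0 < L) (h : -(n * L) ≤ x) :
    (1 / 2 : ℝ) ^ n ≤ exp (log 2 / L * x) := by
  have hhalf : (1 / 2 : ℝ) ^ n = exp (log 2 / L * -(n * L)) := by
    rw [one_div, inv_pow, ← exp_log (pow_pos two_pos n), ← exp_neg, Real.log_pow]
    field_simp
  rw [hhalf]
  exact exp_le_exp.2 (mul_le_mul_of_nonneg_left h (div_nonneg (log_nonneg one_le_two) hL.le))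

section IterationScheme

variable {α K L u : ℝ} {f : ℝ → ℝ}

lemma mul_exp_neg_le_quarter_pow (hα : 0 ≤ α) (hK : 1 ≤ K)
    (hKL : K * exp (-α * L) ≤ 1 / 4) {k : ℕ} (hk : 1 ≤ k) {d : ℝ} (hd : k * L ≤ d) :
    K * exp (-α * d) ≤ (1 / 4) ^ k :=
  calc K * exp (-α * d) ≤ K * exp (k * (-α * L)) :=
        mul_le_mul_of_nonneg_left (exp_le_exp.2 (by nlinarith)) (by linarith)
    _ ≤ K ^ k * exp (-α * L) ^ k := by
        rw [exp_nat_mul]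
        gcongr
        exact le_self_pow₀ hK (by omega)
    _ = (K * exp (-α * L)) ^ k := (mul_pow _ _ _).symm
    _ ≤ (1 / 4) ^ k := by gcongr

lemma weighted_le_half_pow (hα : 0 ≤ α) (hL : 0 < L) (hK : 1 ≤ K)
    (hKL : K * exp (-α * L) ≤ 1 / 4) (hf1 : ∀ t, f t ≤ 1) {m : ℕ}
    (hm : ∀ n ≤ m, ∀ s ≤ u - n * L, f s ≤ (1 / 2) ^ n) {t s : ℝ}
    (ht : t ≤ u - (m + 1) * L) (hs : t + L ≤ s) :
    K * (exp (-α * (s - t)) * f s) ≤ (1 / 2) ^ (m + 1) := by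
  obtain ⟨k, hkd, hdk⟩ := exists_nat_mul_le_lt_succ_mul hL (by linarith : 0 ≤ s - t)
  have hk : 1 ≤ k := by
    have : (0 : ℝ) < k := by nlinarith
    exact_mod_cast this
  -- `m - k` truncates to `0` when `k > m`, where `hf1` is all that is needed.
  have hfs : f s ≤ (1 / 2) ^ (m - k) := by
    by_cases hkm : k ≤ m
    · refine hm (m - k) (Nat.sub_le m k) s ?_
      rw [Nat.cast_sub hkm]
      linarith
    · simpa [Nat.sub_eq_zero_of_le (Nat.le_of_not_le hkm)] using hf1 s
  calc K * (exp (-α * (s - t)) * f s) = K * exp (-α * (s - t)) * f s := (mul_assoc _ _ _).symm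
    _ ≤ (1 / 4) ^ k * (1 / 2) ^ (m - k) :=
        mul_le_mul_of_nonneg (mul_exp_neg_le_quarter_pow hα hK hKL hk hkd) hfs
          (by positivity) (by positivity)
    _ = (1 / 2) ^ (2 * k + (m - k)) := by rw [pow_add, pow_mul]; norm_num
    _ ≤ (1 / 2) ^ (m + 1) := pow_le_pow_of_le_one (by norm_num) (by norm_num) (by omega)

theorem le_half_pow_of_step (hα : 0 ≤ α) (hL : 0 < L) (hK : 1 ≤ K)
    (hKL : K * exp (-α * L) ≤ 1 / 4) (hf1 : ∀ t, f t ≤ 1)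
    (hstep : ∀ t ≤ u - L, f t ≤ max ((1 / 2) * sSup (f '' Iic (t + L)))
      (K * sSup ((fun s => exp (-α * (s - t)) * f s) '' Ici (t + L)))) :
    ∀ n : ℕ, ∀ t ≤ u - n * L, f t ≤ (1 / 2) ^ n := by
  intro n
  induction n using Nat.strong_induction_on with
  | _ n ih =>
    rcases n with _ | m
    · simpa using fun t _ => hf1 t
    intro t ht
    push_cast at ht
    refine (hstep t (by nlinarith [m.cast_nonneg (α := ℝ)])).trans (max_le ?_ ?_)
    · have hsup : sSup (f '' Iic (t + L)) ≤ (1 / 2) ^ m :=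
        Real.sSup_le (by
          rintro _ ⟨s, hs, rfl⟩
          exact ih m m.lt_succ_self s (by rw [mem_Iic] at hs; linarith)) (by positivity)
      rw [pow_succ']
      gcongr
    · refine mul_sSup_le_of_forall_mul_le (by linarith) (by positivity) ?_
      rintro _ ⟨s, hs, rfl⟩
      exact weighted_le_half_pow hα hL hK hKL hf1 (fun n hn => ih n (Nat.lt_succ_of_le hn)) ht hs

end IterationScheme

theorem iteration_scheme_exponential_decay_general
    (σ p α K τ : ℝ) (hσ : 0 < σ) (hp : 0 < p) (hα : 0 < α) (hK : 1 ≤ K)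
    (hKsmall : K * Real.exp (-α * (σ + p)) ≤ 1 / 4)
    (f : ℝ → ℝ) (hf1 : ∀ t, f t ≤ 1)
    (hstep : ∀ τ' ≤ τ, ∀ t ≤ τ' - σ,
      f t ≤ max ((1 / 2) * sSup (f '' Set.Iic (τ' + p)))
              (K * sSup ((fun s => Real.exp (-α * (s - t)) * f s) '' Set.Ici (τ' + p)))) :
    (∀ m : ℕ, ∀ t ≤ τ - σ - m * (σ + p), f t ≤ (1 / 2) ^ (m + 1)) ∧
    (∀ t ≤ τ - σ,
      f t ≤ Real.exp ((Real.log 2 / (σ + p)) * (σ + p))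
              * Real.exp ((Real.log 2 / (σ + p)) * (t - τ))) := by
  have hL : 0 < σ + p := by linarith
  have decay : ∀ n : ℕ, ∀ t ≤ τ + p - n * (σ + p), f t ≤ (1 / 2) ^ n := by
    refine le_half_pow_of_step hα.le hL hK hKsmall hf1 fun t ht => ?_
    simpa only [add_assoc] using hstep (t + σ) (by linarith) t (by linarith)
  refine ⟨fun m t ht => decay (m + 1) t (by push_cast; linarith), fun t ht => ?_⟩
  obtain ⟨n, hn, hn'⟩ := exists_nat_mul_le_lt_succ_mul hL (by linarith : 0 ≤ τ + p - t)
  rw [← exp_add, ← mul_add]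
  exact (decay n t (by linarith)).trans (half_pow_le_exp_log_two_div_mul hL (by linarith))

/-- The abstract iteration scheme converting the one-step halving estimate into
uniform exponential decay. -/
theorem iteration_scheme_exponential_decay
    (σ p α K τ : ℝ) (hσ : 0 < σ) (hp : 0 < p) (hα : 0 < α) (hK : 1 ≤ K)
    (hKsmall : K * Real.exp (-α * (σ + p)) ≤ 1 / 4)
    (f : ℝ → ℝ) (hf0 : ∀ t, 0 ≤ f t) (hf1 : ∀ t, f t ≤ 1)
    (hstep : ∀ τ' ≤ τ, ∀ t ≤ τ' - σ,
      f t ≤ max ((1 / 2) * sSup (f '' Set.Iic (τ' + p)))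
              (K * sSup ((fun s => Real.exp (-α * (s - t)) * f s) '' Set.Ici (τ' + p)))) :
    (∀ m : ℕ, ∀ t ≤ τ - σ - m * (σ + p), f t ≤ (1 / 2) ^ (m + 1)) ∧
    (∀ t ≤ τ - σ,
      f t ≤ Real.exp ((Real.log 2 / (σ + p)) * (σ + p))
              * Real.exp ((Real.log 2 / (σ + p)) * (t - τ))) :=
  iteration_scheme_exponential_decay_general σ p α K τ hσ hp hα hK hKsmall f hf1 hstep
end

section
/- Let c : ℕ → ℂ and 0 < m ≤ M be constants with m ≤ |c_n| ≤ M for all n. Define e ∈ ℓ²(ℕ, ℂ) by e_n = c_n·exp(−n²), and let S : ℓ²(ℕ,ℂ) → ℓ²(ℕ,ℂ) be the backward shift, (Sa)_n = a_{n+1}. Then for every ℓ ∈ ℕ the vectors e, S e, S² e, …, S^ℓ e are linearly independent. In particular the span of { S^N e : N ∈ ℕ } is infinite dimensional. -/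
/-!
The shift `S^N e` has size `exp (-(n + N)^2)` up to the factors `m` and `M`, and
`exp (-(n + j)^2) / exp (-(n + i)^2) → 0` for `i < j`. So the shifts form a scale of strictly
faster decaying sequences: in a vanishing linear combination the shift of least index would be
negligible compared with itself, hence its coefficient vanishes.
-/

open Asymptotics Filter Finset

theorem linearIndependent_of_isLittleO {𝕜 E α ι : Type*} [NormedField 𝕜] [NormedAddCommGroup E]
    [NormedSpace 𝕜 E] [LinearOrder ι] {l : Filter α} {u : ι → α → E}
    (hu : ∀ i, ∃ᶠ x in l, u i x ≠ 0) (huo : ∀ i j, i < j → u j =o[l] u i) :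
    LinearIndependent 𝕜 u := by
  rw [linearIndependent_iff]
  intro g hg
  by_contra hg0
  have hne : g.support.Nonempty := Finsupp.support_nonempty_iff.mpr hg0
  set i₀ := g.support.min' hne
  have hi₀ : i₀ ∈ g.support := g.support.min'_mem hne
  have hrest : (∑ j ∈ g.support.erase i₀, g j • u j) =o[l] u i₀ := by
    refine IsLittleO.sum fun j hj => (huo i₀ j ?_).const_smul_left (g j)
    exact lt_of_le_of_ne (g.support.min'_le j (mem_of_mem_erase hj)) (ne_of_mem_erase hj).symm
  have hlead : g i₀ • u i₀ = -∑ j ∈ g.support.erase i₀, g j • u j := by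
    rw [eq_neg_iff_add_eq_zero, add_sum_erase _ (fun j => g j • u j) hi₀]
    simpa [Finsupp.linearCombination_apply, Finsupp.sum] using hg
  have hself : u i₀ =o[l] u i₀ := by
    rw [← isLittleO_const_smul_left (Finsupp.mem_support_iff.mp hi₀)]
    refine hrest.neg_left.congr_left fun x => ?_
    simpa [Finset.sum_apply] using (congrFun hlead x).symm
  exact isLittleO_irrefl (hu i₀) hself

theorem isTheta_mul_ofReal_of_le_norm_of_norm_le {α : Type*} {l : Filter α} {c : α → ℂ} {f : α → ℝ}
    {m M : ℝ} (hm : 0 < m) (hcm : ∀ x, m ≤ ‖c x‖) (hcM : ∀ x, ‖c x‖ ≤ M) :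
    (fun x => c x * (f x : ℂ)) =Θ[l] f := by
  refine ⟨IsBigO.of_bound M (Eventually.of_forall fun x => ?_),
    IsBigO.of_bound m⁻¹ (Eventually.of_forall fun x => ?_)⟩
  · rw [norm_mul, Complex.norm_real]
    exact mul_le_mul_of_nonneg_right (hcM x) (norm_nonneg _)
  · rw [norm_mul, Complex.norm_real, ← mul_assoc]
    exact le_mul_of_one_le_left (norm_nonneg _) ((one_le_inv_mul₀ hm).mpr (hcm x))

theorem isLittleO_exp_neg_sq_add {i j : ℕ} (hij : i < j) :
    (fun n : ℕ => Real.exp (-((n + j : ℕ) : ℝ) ^ 2)) =o[atTop]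
      (fun n : ℕ => Real.exp (-((n + i : ℕ) : ℝ) ^ 2)) := by
  rw [Real.isLittleO_exp_comp_exp_comp]
  refine tendsto_atTop_mono (fun n => ?_) tendsto_natCast_atTop_atTop
  have : (i : ℝ) + 1 ≤ j := by exact_mod_cast hij
  push_cast
  nlinarith [(n.cast_nonneg : (0 : ℝ) ≤ n), (i.cast_nonneg : (0 : ℝ) ≤ i)]

theorem linearIndependent_mul_exp_neg_sq_add (c : ℕ → ℂ) {m M : ℝ} (hm : 0 < m)
    (hcm : ∀ n, m ≤ ‖c n‖) (hcM : ∀ n, ‖c n‖ ≤ M) :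
    LinearIndependent ℂ (fun N n : ℕ => c (n + N) * (Real.exp (-((n + N : ℕ) : ℝ) ^ 2) : ℂ)) := by
  have hθ (N : ℕ) := isTheta_mul_ofReal_of_le_norm_of_norm_le (l := atTop)
    (f := fun n : ℕ => Real.exp (-((n + N : ℕ) : ℝ) ^ 2)) hm
    (fun n => hcm (n + N)) (fun n => hcM (n + N))
  refine linearIndependent_of_isLittleO (fun N => Eventually.frequently (Eventually.of_forall
    fun n => ?_)) fun i j hij => ((hθ j).isLittleO_congr_left.mpr ?_)
  · exact mul_ne_zero (norm_pos_iff.mp (hm.trans_le (hcm _)))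
      (by exact_mod_cast (Real.exp_pos _).ne')
  · exact (hθ i).isLittleO_congr_right.mpr (isLittleO_exp_neg_sq_add hij)

theorem gaussian_shifts_linearIndependent_general
    (c : ℕ → ℂ) (m M : ℝ) (hm : 0 < m)
    (hc : ∀ n, m ≤ ‖c n‖ ∧ ‖c n‖ ≤ M) :
    (∀ ℓ : ℕ, LinearIndependent ℂ
      (fun i : Fin (ℓ + 1) =>
        (fun n : ℕ => c (n + (i : ℕ)) * (Real.exp (-((n + (i : ℕ) : ℕ) : ℝ) ^ 2) : ℂ)
          : ℕ → ℂ))) ∧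
    ¬ Module.Finite ℂ
      (Submodule.span ℂ (Set.range (fun N : ℕ =>
        (fun n : ℕ => c (n + N) * (Real.exp (-((n + N : ℕ) : ℝ) ^ 2) : ℂ) : ℕ → ℂ)))) := by
  have hli := linearIndependent_mul_exp_neg_sq_add c hm (fun n => (hc n).1) (fun n => (hc n).2)
  refine ⟨fun ℓ => hli.comp _ Fin.val_injective, fun hfin => ?_⟩
  have := Module.Finite.finite_basis (Module.Basis.span hli)
  exact not_finite ℕ

/-- Gaussian-decaying sequences with mixed coefficients bounded away from zero:
all backward shifts are linearly independent, and their span is infinite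
dimensional. -/
theorem gaussian_shifts_linearIndependent
    (c : ℕ → ℂ) (m M : ℝ) (hm : 0 < m) (hmM : m ≤ M)
    (hc : ∀ n, m ≤ ‖c n‖ ∧ ‖c n‖ ≤ M) :
    (∀ ℓ : ℕ, LinearIndependent ℂ
      (fun i : Fin (ℓ + 1) =>
        (fun n : ℕ => c (n + (i : ℕ)) * (Real.exp (-((n + (i : ℕ) : ℕ) : ℝ) ^ 2) : ℂ)
          : ℕ → ℂ))) ∧
    ¬ Module.Finite ℂ
      (Submodule.span ℂ (Set.range (fun N : ℕ =>
        (fun n : ℕ => c (n + N) * (Real.exp (-((n + N : ℕ) : ℝ) ^ 2) : ℂ) : ℕ → ℂ)))) :=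
  gaussian_shifts_linearIndependent_general c m M hm hc
end

section
/- Let φ₀ : ℝ → ℂ be a continuous function whose support is contained in the open interval (1,2), and define ψ : ℝ → ℂ by ψ(s) = φ₀(s) − e·φ₀(s−1). Then for every s ∈ ℝ the series ∑_{k=1}^∞ exp(−k)·ψ(s+k) converges absolutely and equals −φ₀(s). In particular ∑_{k=1}^∞ exp(−k)·ψ(s+k) = 0 for every s ≤ 0. -/
/-!
Writing `f k = e^{-k} φ₀(s + k)`, the `k`-th term of the series is `f (k + 1) - f k`, and `f`
vanishes for large `k` because `φ₀` has bounded support. The series is therefore a finite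
telescoping sum with value `-f 0 = -φ₀ s`, which vanishes for `s ≤ 0 < 1`.
-/

open Filter

theorem summable_of_eventually_eq_zero {M : Type*} [AddCommMonoid M] [TopologicalSpace M]
    {g : ℕ → M} (hg : ∀ᶠ k in atTop, g k = 0) : Summable g := by
  obtain ⟨N, hN⟩ := hg.exists_forall_of_atTop
  exact summable_of_ne_finset_zero (s := Finset.range N) fun k hk => hN k (by simpa using hk)

section Telescoping

variable {E : Type*} [AddCommGroup E]

theorem eventually_sub_succ_eq_zero {f : ℕ → E} (hf : ∀ᶠ k in atTop, f k = 0) :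
    ∀ᶠ k in atTop, f (k + 1) - f k = 0 :=
  (hf.and ((tendsto_add_atTop_nat 1).eventually hf)).mono fun k hk => by
    rw [hk.1, hk.2, sub_zero]

theorem hasSum_sub_succ_of_eventually_eq_zero [TopologicalSpace E] {f : ℕ → E}
    (hf : ∀ᶠ k in atTop, f k = 0) :
    HasSum (fun k => f (k + 1) - f k) (-f 0) := by
  obtain ⟨N, hN⟩ := hf.exists_forall_of_atTop
  have hsum : HasSum (fun k => f (k + 1) - f k) (∑ k ∈ Finset.range N, (f (k + 1) - f k)) :=
    hasSum_sum_of_ne_finset_zero fun k hk => by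
      have hNk : N ≤ k := by simpa using hk
      rw [hN k hNk, hN (k + 1) (by omega), sub_zero]
  rwa [Finset.sum_range_sub, hN N le_rfl, zero_sub] at hsum

end Telescoping

theorem eventually_apply_add_natCast_eq_zero {E : Type*} [Zero E] {φ : ℝ → E} {b : ℝ}
    (hφ : Function.support φ ⊆ Set.Iio b) (s : ℝ) :
    ∀ᶠ k : ℕ in atTop, φ (s + k) = 0 :=
  ((tendsto_atTop_add_const_left atTop s tendsto_natCast_atTop_atTop).eventually_ge_atTop b).mono
    fun _ hk => Function.notMem_support.1 fun h => (hφ h).not_ge hk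

theorem exp_neg_succ_mul_sub_exp_one_mul (φ : ℝ → ℂ) (s : ℝ) (k : ℕ) :
    (Real.exp (-((k : ℝ) + 1)) : ℂ) *
        (φ (s + ((k : ℝ) + 1)) - (Real.exp 1 : ℂ) * φ (s + ((k : ℝ) + 1) - 1)) =
      (Real.exp (-((k + 1 : ℕ) : ℝ)) : ℂ) * φ (s + (k + 1 : ℕ)) -
        (Real.exp (-(k : ℝ)) : ℂ) * φ (s + k) := by
  have hexp : (Real.exp (-((k : ℝ) + 1)) : ℂ) * Real.exp 1 = Real.exp (-(k : ℝ)) := by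
    rw [← Complex.ofReal_mul, ← Real.exp_add, neg_add, neg_add_cancel_right]
  have hshift : s + ((k : ℝ) + 1) - 1 = s + k := by ring
  rw [hshift, mul_sub, ← mul_assoc, hexp]
  push_cast
  ring

theorem telescoping_annihilator_general
    (φ₀ : ℝ → ℂ)
    (hsupp : Function.support φ₀ ⊆ Set.Ioo (1 : ℝ) 2)
    (ψ : ℝ → ℂ) (hψ : ∀ s, ψ s = φ₀ s - (Real.exp 1 : ℂ) * φ₀ (s - 1)) :
    (∀ s : ℝ,
      Summable (fun k : ℕ => ‖(Real.exp (-((k : ℝ) + 1)) : ℂ) * ψ (s + ((k : ℝ) + 1))‖) ∧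
      (∑' k : ℕ, (Real.exp (-((k : ℝ) + 1)) : ℂ) * ψ (s + ((k : ℝ) + 1))) = -φ₀ s) ∧
    (∀ s ≤ (0 : ℝ),
      (∑' k : ℕ, (Real.exp (-((k : ℝ) + 1)) : ℂ) * ψ (s + ((k : ℝ) + 1))) = 0) := by
  have hmain : ∀ s : ℝ,
      Summable (fun k : ℕ => ‖(Real.exp (-((k : ℝ) + 1)) : ℂ) * ψ (s + ((k : ℝ) + 1))‖) ∧
      (∑' k : ℕ, (Real.exp (-((k : ℝ) + 1)) : ℂ) * ψ (s + ((k : ℝ) + 1))) = -φ₀ s := by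
    intro s
    set f : ℕ → ℂ := fun k => (Real.exp (-(k : ℝ)) : ℂ) * φ₀ (s + k)
    have hterm : ∀ k : ℕ,
        (Real.exp (-((k : ℝ) + 1)) : ℂ) * ψ (s + ((k : ℝ) + 1)) = f (k + 1) - f k := fun k => by
      rw [hψ, exp_neg_succ_mul_sub_exp_one_mul]
    have hf : ∀ᶠ k in atTop, f k = 0 :=
      (eventually_apply_add_natCast_eq_zero (hsupp.trans Set.Ioo_subset_Iio_self) s).mono
        fun k hk => by simp only [f, hk, mul_zero]
    simp only [hterm]
    refine ⟨summable_of_eventually_eq_zero ?_, ?_⟩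
    · exact (eventually_sub_succ_eq_zero hf).mono fun k hk => by rw [hk, norm_zero]
    · simpa [f] using (hasSum_sub_succ_of_eventually_eq_zero hf).tsum_eq
  refine ⟨hmain, fun s hs => ?_⟩
  have hφ₀s : φ₀ s = 0 := Function.notMem_support.1 fun h => (hsupp h).1.not_ge (by linarith)
  rw [(hmain s).2, hφ₀s, neg_zero]

/-- Telescoping identity producing an explicit function annihilated by the tail
functionals of the kernel γ_k = e^{-k}. -/
theorem telescoping_annihilator
    (φ₀ : ℝ → ℂ) (hcont : Continuous φ₀)
    (hsupp : Function.support φ₀ ⊆ Set.Ioo (1 : ℝ) 2)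
    (ψ : ℝ → ℂ) (hψ : ∀ s, ψ s = φ₀ s - (Real.exp 1 : ℂ) * φ₀ (s - 1)) :
    (∀ s : ℝ,
      Summable (fun k : ℕ => ‖(Real.exp (-((k : ℝ) + 1)) : ℂ) * ψ (s + ((k : ℝ) + 1))‖) ∧
      (∑' k : ℕ, (Real.exp (-((k : ℝ) + 1)) : ℂ) * ψ (s + ((k : ℝ) + 1))) = -φ₀ s) ∧
    (∀ s ≤ (0 : ℝ),
      (∑' k : ℕ, (Real.exp (-((k : ℝ) + 1)) : ℂ) * ψ (s + ((k : ℝ) + 1))) = 0) :=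
  telescoping_annihilator_general φ₀ hsupp ψ hψ
end

section
/- Let ψ : ℝ → ℂ be a bounded measurable function vanishing outside the compact interval [0,4] and satisfying ∫_0^∞ ψ(r)·exp(−r) dr = 0. Then for every bounded continuous φ : ℝ → ℂ one has ∫_0^∞ ∫_{−r}^0 ψ(s+r)·exp(−r)·φ(s) ds dr = 0. -/
/-!
The shear `u = r + s` maps the region `{r > 0, -r < s ≤ 0}` onto the quadrant `{u > 0, s ≤ 0}`,
and the kernel factors as `exp (-r) = exp (-u) * exp s`. The double integral is therefore the
product `(∫_{u > 0} ψ u * exp (-u)) * (∫_{s ≤ 0} exp s * φ s)`, whose first factor vanishes.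
-/

open MeasureTheory Set

theorem integral_integral_add_mul {G 𝕜 : Type*} [AddGroup G] [MeasurableSpace G]
    [MeasurableAdd₂ G] [RCLike 𝕜] (μ ν : Measure G) [SFinite μ] [SFinite ν]
    [μ.IsAddRightInvariant] {f g : G → 𝕜} (hf : Integrable f μ) (hg : Integrable g ν) :
    ∫ x, ∫ y, f (x + y) * g y ∂ν ∂μ = (∫ x, f x ∂μ) * ∫ y, g y ∂ν := by
  have hshear := measurePreserving_add_prod μ ν
  have hprod : Integrable (fun z : G × G => f z.1 * g z.2) (μ.prod ν) := hf.mul_prod hg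
  calc ∫ x, ∫ y, f (x + y) * g y ∂ν ∂μ = ∫ z, f (z.1 + z.2) * g z.2 ∂μ.prod ν :=
        (integral_prod _ ((hshear.integrable_comp hprod.aestronglyMeasurable).mpr hprod)).symm
    _ = ∫ z, f z.1 * g z.2 ∂(μ.prod ν).map (fun z => (z.1 + z.2, z.2)) :=
        (integral_map hshear.measurable.aemeasurable
          (hshear.map_eq.symm ▸ hprod.aestronglyMeasurable)).symm
    _ = (∫ x, f x ∂μ) * ∫ y, g y ∂ν := by rw [hshear.map_eq, integral_prod_mul]

theorem indicator_add_mul_indicator {𝕜 : Type*} [MulZeroClass 𝕜] (f g : ℝ → 𝕜) (r s : ℝ) :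
    (Ioi 0).indicator f (r + s) * (Iic 0).indicator g s =
      (Ioi 0).indicator (fun r => (Ioc (-r) 0).indicator (fun s => f (r + s) * g s) s) r := by
  simp only [indicator_apply, mem_Ioi, mem_Iic, mem_Ioc]
  split_ifs <;> grind [mul_zero, zero_mul]

theorem integral_Ioi_intervalIntegral_add_mul {𝕜 : Type*} [RCLike 𝕜] {f g : ℝ → 𝕜}
    (hf : IntegrableOn f (Ioi 0)) (hg : IntegrableOn g (Iic 0)) :
    ∫ r in Ioi 0, ∫ s in (-r)..0, f (r + s) * g s =
      (∫ u in Ioi 0, f u) * ∫ s in Iic 0, g s := by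
  have hinner : ∀ r, ∫ s, (Ioi 0).indicator f (r + s) * (Iic 0).indicator g s =
      (Ioi 0).indicator (fun r => ∫ s in (-r)..0, f (r + s) * g s) r := by
    intro r
    simp_rw [indicator_add_mul_indicator]
    by_cases hr : r ∈ Ioi 0
    · simp only [indicator_of_mem hr]
      rw [intervalIntegral.integral_of_le (neg_nonpos.2 (le_of_lt hr)),
        integral_indicator measurableSet_Ioc]
    · simp only [indicator_of_notMem hr, integral_zero]
  rw [← integral_indicator measurableSet_Ioi, ← integral_indicator measurableSet_Ioi,
    ← integral_indicator measurableSet_Iic, ← integral_integral_add_mul volume volume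
      ((integrable_indicator_iff measurableSet_Ioi).2 hf)
      ((integrable_indicator_iff measurableSet_Iic).2 hg)]
  simp_rw [hinner]

theorem integrableOn_Ioi_mul_exp_neg {ψ : ℝ → ℂ} (hψ : AEStronglyMeasurable ψ)
    (hb : ∃ B, ∀ r, ‖ψ r‖ ≤ B) (c : ℝ) :
    IntegrableOn (fun u => ψ u * (Real.exp (-u) : ℂ)) (Ioi c) := by
  obtain ⟨B, hB⟩ := hb
  exact (integrableOn_exp_neg_Ioi c).ofReal.bdd_mul hψ.restrict (ae_of_all _ hB)

theorem integrableOn_Iic_exp_mul {φ : ℝ → ℂ} (hφ : AEStronglyMeasurable φ)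
    (hb : ∃ B, ∀ s, ‖φ s‖ ≤ B) (c : ℝ) :
    IntegrableOn (fun s => (Real.exp s : ℂ) * φ s) (Iic c) := by
  obtain ⟨B, hB⟩ := hb
  exact (integrableOn_exp_Iic c).ofReal.mul_bdd hφ.restrict (ae_of_all _ hB)

theorem hale_degenerate_convolution_general
    (ψ : ℝ → ℂ) (hmeas : Measurable ψ) (hb : ∃ B, ∀ r, ‖ψ r‖ ≤ B)
    (hzero : (∫ r in Set.Ioi (0 : ℝ), ψ r * (Real.exp (-r) : ℂ)) = 0)
    (φ : ℝ → ℂ) (hφc : Continuous φ) (hφb : ∃ B, ∀ s, ‖φ s‖ ≤ B) :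
    (∫ r in Set.Ioi (0 : ℝ),
        ∫ s in (-r)..0, ψ (s + r) * (Real.exp (-r) : ℂ) * φ s) = 0 := by
  have hfactor : ∀ r s, ψ (s + r) * (Real.exp (-r) : ℂ) * φ s =
      ψ (r + s) * (Real.exp (-(r + s)) : ℂ) * ((Real.exp s : ℂ) * φ s) := by
    intro r s
    have hexp : (Real.exp (-r) : ℂ) = Real.exp (-(r + s)) * Real.exp s := by
      rw [← Complex.ofReal_mul, ← Real.exp_add]
      ring_nf
    rw [add_comm s r, hexp]
    ring
  simp_rw [hfactor]
  rw [integral_Ioi_intervalIntegral_add_mul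
    (integrableOn_Ioi_mul_exp_neg hmeas.aestronglyMeasurable hb 0)
    (integrableOn_Iic_exp_mul hφc.aestronglyMeasurable hφb 0), hzero, zero_mul]

/-- Degeneracy of the Hale inner product for the exponential convolution kernel
θ(ξ) = exp(-ξ). -/
theorem hale_degenerate_convolution
    (ψ : ℝ → ℂ) (hmeas : Measurable ψ) (hb : ∃ B, ∀ r, ‖ψ r‖ ≤ B)
    (hsupp : ∀ r, r ∉ Set.Icc (0 : ℝ) 4 → ψ r = 0)
    (hzero : (∫ r in Set.Ioi (0 : ℝ), ψ r * (Real.exp (-r) : ℂ)) = 0)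
    (φ : ℝ → ℂ) (hφc : Continuous φ) (hφb : ∃ B, ∀ s, ‖φ s‖ ≤ B) :
    (∫ r in Set.Ioi (0 : ℝ),
        ∫ s in (-r)..0, ψ (s + r) * (Real.exp (-r) : ℂ) * φ s) = 0 :=
  hale_degenerate_convolution_general ψ hmeas hb hzero φ hφc hφb
end

section
/- Let β > 0, r : ℤ → ℝ, and for each j ∈ ℤ let A_j : ℝ → ℂ be continuous with a_j := sup_t |A_j(t)|, where ∑_j a_j·|r_j|·exp(β·|r_j|) < ∞. Let x : ℝ → ℂ be bounded and let y : ℝ → ℂ be continuous with |y(s)| ≤ K·exp(−β·max(s,0)) for all s ∈ ℝ and some K > 0. Define H(t) = conj(y(t))·x(t) − ∑_{j∈ℤ} ∫_t^{t+r_j} conj(y(s−r_j))·A_j(s−r_j)·x(s) ds. Then H(t) → 0 as t → ∞. -/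
/-!
Write `H(t)` for the Hale inner product. For `s` between `t` and `t + r_j` the delayed argument
`s - r_j` is at least `t - |r_j|`, so exponential decay of `y` gives
`|y(s - r_j)| ≤ K e^{β|r_j|} e^{-βt}`; each integral is then at most
`K ‖x‖_∞ a_j |r_j| e^{β|r_j|} e^{-βt}`. Summing over `j`,
`|H(t)| ≤ K ‖x‖_∞ (1 + ∑_j a_j |r_j| e^{β|r_j|}) e^{-βt}`, which tends to `0`.
-/

open Real Filter Topology ComplexConjugate

section

variable {β K t r : ℝ}

theorem norm_le_mul_exp_neg_of_le_mul_exp_neg_max {E : Type*} [SeminormedAddGroup E]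
    {y : ℝ → E} (hβ : 0 ≤ β) (hy : ∀ s, ‖y s‖ ≤ K * exp (-β * max s 0)) (s : ℝ) :
    ‖y s‖ ≤ K * exp (-β * s) := by
  have hK : 0 ≤ K := nonneg_of_mul_nonneg_left ((norm_nonneg _).trans (hy s)) (exp_pos _)
  refine (hy s).trans ?_
  gcongr ?_ * exp ?_
  nlinarith [le_max_left s 0]

theorem sub_abs_le_sub_of_mem_uIoc {s : ℝ} (hs : s ∈ Set.uIoc t (t + r)) :
    t - |r| ≤ s - r := by
  have : t + r - |r| ≤ min t (t + r) :=
    le_min (by linarith [le_abs_self r]) (by linarith [abs_nonneg r])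
  linarith [hs.1]

theorem norm_le_of_exp_decay_of_sub_abs_le {E : Type*} [SeminormedAddGroup E] {y : ℝ → E}
    {u : ℝ} (hβ : 0 ≤ β) (hy : ∀ s, ‖y s‖ ≤ K * exp (-β * s)) (hu : t - |r| ≤ u) :
    ‖y u‖ ≤ K * exp (β * |r|) * exp (-β * t) := by
  have hK : 0 ≤ K := nonneg_of_mul_nonneg_left ((norm_nonneg _).trans (hy u)) (exp_pos _)
  calc ‖y u‖ ≤ K * exp (-β * u) := hy u
    _ ≤ K * exp (β * |r| + -β * t) := by gcongr; nlinarith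
    _ = K * exp (β * |r|) * exp (-β * t) := by rw [exp_add, mul_assoc]

variable {𝕜 : Type*} [RCLike 𝕜] {x y A : ℝ → 𝕜} {a B : ℝ}

theorem norm_integral_conj_mul_mul_le (hβ : 0 ≤ β) (hy : ∀ s, ‖y s‖ ≤ K * exp (-β * s))
    (hA : ∀ s, ‖A s‖ ≤ a) (hx : ∀ s, ‖x s‖ ≤ B) :
    ‖∫ s in t..(t + r), conj (y (s - r)) * A (s - r) * x s‖
      ≤ K * B * exp (-β * t) * (a * |r| * exp (β * |r|)) := by
  have hbound : ∀ s ∈ Set.uIoc t (t + r), ‖conj (y (s - r)) * A (s - r) * x s‖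
      ≤ K * exp (β * |r|) * exp (-β * t) * a * B := by
    intro s hs
    have hys := norm_le_of_exp_decay_of_sub_abs_le hβ hy (sub_abs_le_sub_of_mem_uIoc hs)
    rw [norm_mul, norm_mul, RCLike.norm_conj]
    have hys₀ : 0 ≤ K * exp (β * |r|) * exp (-β * t) := (norm_nonneg _).trans hys
    have ha : 0 ≤ a := (norm_nonneg _).trans (hA 0)
    exact mul_le_mul (mul_le_mul hys (hA _) (norm_nonneg _) hys₀) (hx s) (norm_nonneg _)
      (mul_nonneg hys₀ ha)
  refine (intervalIntegral.norm_integral_le_of_norm_le_const hbound).trans_eq ?_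
  rw [add_sub_cancel_left]
  ring

/-- The paper's `⟨y^t, x_t⟩_t`, for the delays `r j` and coefficients `A j`. -/
noncomputable def haleInnerProduct (r : ℤ → ℝ) (A : ℤ → ℝ → 𝕜) (x y : ℝ → 𝕜) (t : ℝ) : 𝕜 :=
  conj (y t) * x t - ∑' j, ∫ s in t..(t + r j), conj (y (s - r j)) * A j (s - r j) * x s

theorem norm_haleInnerProduct_le {r : ℤ → ℝ} {A : ℤ → ℝ → 𝕜} {a : ℤ → ℝ} (hβ : 0 ≤ β)
    (hA : ∀ j s, ‖A j s‖ ≤ a j)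
    (hsum : Summable fun j => a j * |r j| * exp (β * |r j|))
    (hx : ∀ s, ‖x s‖ ≤ B) (hy : ∀ s, ‖y s‖ ≤ K * exp (-β * s)) (t : ℝ) :
    ‖haleInnerProduct r A x y t‖
      ≤ K * B * exp (-β * t) * (1 + ∑' j, a j * |r j| * exp (β * |r j|)) := by
  have hfirst : ‖conj (y t) * x t‖ ≤ K * B * exp (-β * t) := by
    rw [norm_mul, RCLike.norm_conj, mul_right_comm]
    exact mul_le_mul (hy t) (hx t) (norm_nonneg _) ((norm_nonneg _).trans (hy t))
  have hseries := tsum_of_norm_bounded (hsum.hasSum.mul_left (K * B * exp (-β * t)))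
    fun j => norm_integral_conj_mul_mul_le hβ hy (hA j) hx
  calc ‖haleInnerProduct r A x y t‖ ≤ K * B * exp (-β * t)
        + K * B * exp (-β * t) * ∑' j, a j * |r j| * exp (β * |r j|) :=
        (norm_sub_le _ _).trans (add_le_add hfirst hseries)
    _ = _ := by ring

end

theorem hale_inner_product_vanishes_at_infinity_general
    (β : ℝ) (hβ : 0 < β) (r : ℤ → ℝ) (A : ℤ → ℝ → ℂ) (a : ℤ → ℝ)
    (hAb : ∀ j t, ‖A j t‖ ≤ a j)
    (hsum : Summable (fun j : ℤ => a j * |r j| * Real.exp (β * |r j|)))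
    (x y : ℝ → ℂ) (hxb : ∃ B, ∀ t, ‖x t‖ ≤ B)
    (K : ℝ) (hy : ∀ s, ‖y s‖ ≤ K * Real.exp (-β * max s 0)) :
    Filter.Tendsto
      (fun t : ℝ => (starRingEnd ℂ) (y t) * x t
        - ∑' j : ℤ, ∫ s in t..(t + r j),
            (starRingEnd ℂ) (y (s - r j)) * A j (s - r j) * x s)
      Filter.atTop (nhds 0) := by
  obtain ⟨B, hx⟩ := hxb
  have hbound := norm_haleInnerProduct_le hβ.le hAb hsum hx
    (norm_le_mul_exp_neg_of_le_mul_exp_neg_max hβ.le hy)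
  have hexp : Tendsto (fun t => exp (-β * t)) atTop (𝓝 0) :=
    tendsto_exp_atBot.comp (tendsto_id.const_mul_atTop_of_neg (neg_lt_zero.mpr hβ))
  refine squeeze_zero_norm hbound ?_
  simpa using (hexp.const_mul (K * B)).mul_const (1 + ∑' j, a j * |r j| * exp (β * |r j|))

/-- The Hale inner product ⟨y^t, x_t⟩_t tends to 0 as t → ∞ when y decays
exponentially. -/
theorem hale_inner_product_vanishes_at_infinity
    (β : ℝ) (hβ : 0 < β) (r : ℤ → ℝ) (A : ℤ → ℝ → ℂ) (a : ℤ → ℝ)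
    (hAc : ∀ j, Continuous (A j)) (hAb : ∀ j t, ‖A j t‖ ≤ a j)
    (hsum : Summable (fun j : ℤ => a j * |r j| * Real.exp (β * |r j|)))
    (x y : ℝ → ℂ) (hxb : ∃ B, ∀ t, ‖x t‖ ≤ B) (hyc : Continuous y)
    (K : ℝ) (hK : 0 < K) (hy : ∀ s, ‖y s‖ ≤ K * Real.exp (-β * max s 0)) :
    Filter.Tendsto
      (fun t : ℝ => (starRingEnd ℂ) (y t) * x t
        - ∑' j : ℤ, ∫ s in t..(t + r j),
            (starRingEnd ℂ) (y (s - r j)) * A j (s - r j) * x s)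
      Filter.atTop (nhds 0) :=
  hale_inner_product_vanishes_at_infinity_general β hβ r A a hAb hsum x y hxb K hy
end

section
/- Let a < b be real numbers and let d¹, …, dⁿ : [a,b] → ℂ be continuous and linearly independent. Then there exist continuous functions ψ¹, …, ψⁿ : [a,b] → ℂ with ψ^j(a) = ψ^j(b) = 0 for all j, such that ∫_a^b conj(d^i(t))·ψ^j(t) dt = δ_{ij} for all 1 ≤ i, j ≤ n, where δ_{ij} is the Kronecker delta. -/
/-!
Pair against `d i` the functions `χ * d k`, where `χ t = (t - a) * (b - t)` vanishes exactly at the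
endpoints. The resulting weighted Gram matrix `Z` is invertible: if `Z c = 0`, then with
`g = ∑ k, c k * d k` we get `∫ χ |g|² = star c ⬝ᵥ Z c = 0`, so `g` vanishes on `(a, b)`, hence on
`[a, b]`, and linear independence forces `c = 0`. The columns of `Z⁻¹` then give the dual family
`ψ j = χ * ∑ k, Z⁻¹ k j * d k`.
-/

open MeasureTheory Set ComplexConjugate
open scoped Matrix

theorem eqOn_zero_of_intervalIntegral_eq_zero {a b : ℝ} {f : ℝ → ℝ} (hab : a < b)
    (hfc : ContinuousOn f (Icc a b)) (hf : ∀ t ∈ Icc a b, 0 ≤ f t)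
    (h : ∫ t in a..b, f t = 0) : EqOn f 0 (Icc a b) := by
  intro t ht
  by_contra hne
  have hpos := intervalIntegral.integral_pos hab hfc (fun x hx => hf x (Ioc_subset_Icc_self hx))
    ⟨t, ht, (hf t ht).lt_of_ne' hne⟩
  exact hpos.ne' h

theorem eqOn_zero_of_intervalIntegral_mul_normSq_eq_zero {a b : ℝ} {χ : ℝ → ℝ} {g : ℝ → ℂ}
    (hab : a < b) (hχc : ContinuousOn χ (Icc a b)) (hχ₀ : ∀ t ∈ Icc a b, 0 ≤ χ t)
    (hχ : ∀ t ∈ Ioo a b, 0 < χ t) (hg : ContinuousOn g (Icc a b))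
    (h : ∫ t in a..b, χ t * Complex.normSq (g t) = 0) : EqOn g 0 (Icc a b) := by
  have hprod := eqOn_zero_of_intervalIntegral_eq_zero hab
    (hχc.mul (Complex.continuous_normSq.comp_continuousOn hg))
    (fun t ht => mul_nonneg (hχ₀ t ht) (Complex.normSq_nonneg _)) h
  have hIoo : EqOn g 0 (Ioo a b) := fun t ht => by
    simpa [(hχ t ht).ne'] using hprod (Ioo_subset_Icc_self ht)
  exact hIoo.of_subset_closure hg continuousOn_const Ioo_subset_Icc_self
    (closure_Ioo hab.ne).superset

section WeightedGram

variable {ι : Type*} [Fintype ι] {a b : ℝ} {χ : ℝ → ℝ} {d : ι → ℝ → ℂ}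

noncomputable def weightedGram (a b : ℝ) (χ : ℝ → ℝ) (d : ι → ℝ → ℂ) : Matrix ι ι ℂ :=
  Matrix.of fun i j => ∫ t in a..b, conj (d i t) * (χ t * d j t)

theorem intervalIntegrable_conj_mul_weight_mul (hab : a ≤ b) {f g : ℝ → ℂ}
    (hf : ContinuousOn f (Icc a b)) (hχ : ContinuousOn χ (Icc a b))
    (hg : ContinuousOn g (Icc a b)) :
    IntervalIntegrable (fun t => conj (f t) * (χ t * g t)) volume a b := by
  refine ContinuousOn.intervalIntegrable ?_
  rw [uIcc_of_le hab]
  exact (Complex.continuous_conj.comp_continuousOn hf).mul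
    ((Complex.continuous_ofReal.comp_continuousOn hχ).mul hg)

theorem weightedGram_mulVec_apply (hab : a ≤ b) (hχ : ContinuousOn χ (Icc a b))
    (hd : ∀ i, ContinuousOn (d i) (Icc a b)) (c : ι → ℂ) (i : ι) :
    (weightedGram a b χ d *ᵥ c) i = ∫ t in a..b, conj (d i t) * (χ t * ∑ k, c k * d k t) := by
  simp only [Matrix.mulVec, dotProduct, weightedGram, Matrix.of_apply,
    ← intervalIntegral.integral_mul_const]
  rw [← intervalIntegral.integral_finsetSum fun k _ =>
    (intervalIntegrable_conj_mul_weight_mul hab (hd i) hχ (hd k)).mul_const _]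
  congr 1 with t
  simp only [Finset.mul_sum]
  exact Finset.sum_congr rfl fun k _ => by ring

theorem star_dotProduct_weightedGram_mulVec (hab : a ≤ b) (hχ : ContinuousOn χ (Icc a b))
    (hd : ∀ i, ContinuousOn (d i) (Icc a b)) (c : ι → ℂ) :
    star c ⬝ᵥ (weightedGram a b χ d *ᵥ c) =
      ((∫ t in a..b, χ t * Complex.normSq (∑ k, c k * d k t) : ℝ) : ℂ) := by
  have hg : ContinuousOn (fun t => ∑ k, c k * d k t) (Icc a b) :=
    continuousOn_finsetSum _ fun k _ => continuousOn_const.mul (hd k)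
  simp only [dotProduct, weightedGram_mulVec_apply hab hχ hd, Pi.star_apply,
    ← intervalIntegral.integral_const_mul]
  rw [← intervalIntegral.integral_finsetSum fun i _ =>
    (intervalIntegrable_conj_mul_weight_mul hab (hd i) hχ hg).const_mul _,
    ← intervalIntegral.integral_ofReal]
  congr 1 with t
  rw [Complex.ofReal_mul, Complex.normSq_eq_conj_mul_self, map_sum]
  conv_rhs => rw [Finset.sum_mul, Finset.mul_sum]
  exact Finset.sum_congr rfl fun i _ => by simp only [map_mul, starRingEnd_apply]; ring

theorem det_weightedGram_ne_zero [DecidableEq ι] (hab : a < b) (hχc : ContinuousOn χ (Icc a b))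
    (hχ₀ : ∀ t ∈ Icc a b, 0 ≤ χ t) (hχ : ∀ t ∈ Ioo a b, 0 < χ t)
    (hd : ∀ i, ContinuousOn (d i) (Icc a b))
    (hli : LinearIndependent ℂ fun i => (Icc a b).domRestrict (d i)) :
    (weightedGram a b χ d).det ≠ 0 := by
  intro hdet
  obtain ⟨c, hc0, hc⟩ := Matrix.exists_mulVec_eq_zero_iff.mpr hdet
  have hnormSq : ∫ t in a..b, χ t * Complex.normSq (∑ k, c k * d k t) = 0 := by
    have := star_dotProduct_weightedGram_mulVec hab.le hχc hd c
    rw [hc, dotProduct_zero] at this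
    exact_mod_cast this.symm
  have hg := eqOn_zero_of_intervalIntegral_mul_normSq_eq_zero hab hχc hχ₀ hχ
    (continuousOn_finsetSum _ fun k _ => continuousOn_const.mul (hd k)) hnormSq
  refine hc0 (funext (Fintype.linearIndependent_iff.mp hli c (funext fun t => ?_)))
  simpa [Set.domRestrict_apply] using hg t.2

end WeightedGram

/-- Existence of a dual basis of continuous functions vanishing at the endpoints
for a linearly independent family of continuous functions (Lemma 5.2). -/
theorem dual_basis_vanishing_at_endpoints
    (a b : ℝ) (hab : a < b) (n : ℕ) (d : Fin n → ℝ → ℂ)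
    (hdc : ∀ i, ContinuousOn (d i) (Set.Icc a b))
    (hli : LinearIndependent ℂ (fun i => (Set.Icc a b).restrict (d i))) :
    ∃ ψ : Fin n → ℝ → ℂ,
      (∀ j, ContinuousOn (ψ j) (Set.Icc a b)) ∧
      (∀ j, ψ j a = 0 ∧ ψ j b = 0) ∧
      ∀ i j, (∫ t in a..b, (starRingEnd ℂ) (d i t) * ψ j t)
        = if i = j then 1 else 0 := by
  set χ : ℝ → ℝ := fun t => (t - a) * (b - t)
  have hχc : ContinuousOn χ (Icc a b) := by fun_prop
  set Z := weightedGram a b χ d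
  have hdet : Z.det ≠ 0 := det_weightedGram_ne_zero hab hχc
    (fun t ht => mul_nonneg (sub_nonneg.2 ht.1) (sub_nonneg.2 ht.2))
    (fun t ht => mul_pos (sub_pos.2 ht.1) (sub_pos.2 ht.2)) hdc hli
  refine ⟨fun j t => χ t * ∑ k, Z⁻¹ k j * d k t, fun j => ?_, fun j => by simp [χ], fun i j => ?_⟩
  · exact (Complex.continuous_ofReal.comp_continuousOn hχc).mul
      (continuousOn_finsetSum _ fun k _ => continuousOn_const.mul (hdc k))
  · rw [← weightedGram_mulVec_apply hab.le hχc hdc, ← Matrix.one_apply,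
      ← Matrix.mul_nonsing_inv Z (isUnit_iff_ne_zero.mpr hdet)]
    rfl
end

section
/- Let α > 0, τ ∈ ℝ, a : ℤ → ℝ nonnegative and r : ℤ → ℝ, with C₁ := ∑_{j∈ℤ} a_j·exp(α|r_j|) < ∞ and with the tail bound ∑_{j : r_j ≥ T} a_j ≤ K·exp(−2αT) for every T ≥ 0 and some K > 0. Let M, K̃ ≥ 0 and let x : ℝ → ℂ satisfy |x(s)| ≤ M for all s ∈ ℝ and |x(s)| ≤ K̃·M·exp(α(s−τ)) for all s ≤ τ. Then for every t ≤ τ we have ∑_{j∈ℤ} a_j·|x(t+r_j)| ≤ (C₁·K̃ + K)·M·exp(α(t−τ)). -/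
/-!
Split the points `t + r` according to whether they lie to the left of `τ`. Left of `τ` the
decay hypothesis gives `‖x (t + r)‖ ≤ K' M e^{α(t + r - τ)} ≤ e^{α|r|} K' M e^{α(t - τ)}`, and
these terms sum to at most `C₁ K' M e^{α(t - τ)}`. Right of `τ` we only know `‖x‖ ≤ M`, but
then `r ≥ τ - t ≥ 0`, and the tail bound makes the total weight of those `j` at most
`K e^{-2α(τ - t)} ≤ K e^{α(t - τ)}`.
-/

open Real

theorem tsum_le_of_le_mul_add_indicator {ι : Type*} {f a w : ι → ℝ} (S : Set ι) (c M : ℝ)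
    (hf0 : ∀ j, 0 ≤ f j) (ha : Summable a) (haw : Summable fun j => a j * w j)
    (hf : ∀ j, f j ≤ a j * w j * c + S.indicator (fun j => a j * M) j) :
    ∑' j, f j ≤ (∑' j, a j * w j) * c + (∑' j : S, a j) * M := by
  have hbound : Summable fun j => a j * w j * c + S.indicator (fun j => a j * M) j :=
    (haw.mul_right c).add ((ha.mul_right M).indicator S)
  calc ∑' j, f j
      ≤ ∑' j, (a j * w j * c + S.indicator (fun j => a j * M) j) :=
        (hbound.of_nonneg_of_le hf0 hf).tsum_le_tsum hf hbound
    _ = (∑' j, a j * w j) * c + (∑' j : S, a j) * M := by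
        rw [(haw.mul_right c).tsum_add ((ha.mul_right M).indicator S), tsum_mul_right,
          ← tsum_subtype, tsum_mul_right]

theorem norm_le_exp_abs_mul_add_indicator {α τ M K' : ℝ} (hα : 0 ≤ α) {x : ℝ → ℂ}
    (hx1 : ∀ s, ‖x s‖ ≤ M) (hx2 : ∀ s ≤ τ, ‖x s‖ ≤ K' * M * exp (α * (s - τ))) (t r : ℝ) :
    ‖x (t + r)‖ ≤ exp (α * |r|) * (K' * M * exp (α * (t - τ)))
      + {r | τ - t ≤ r}.indicator (fun _ => M) r := by
  have hM : 0 ≤ M := (norm_nonneg _).trans (hx1 0)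
  have hK'M : 0 ≤ K' * M := by simpa using (norm_nonneg _).trans (hx2 τ le_rfl)
  by_cases hleft : t + r ≤ τ
  · have hexp : exp (α * (t + r - τ)) ≤ exp (α * |r|) * exp (α * (t - τ)) := by
      rw [← exp_add, exp_le_exp]
      nlinarith [le_abs_self r]
    calc ‖x (t + r)‖ ≤ K' * M * exp (α * (t + r - τ)) := hx2 _ hleft
      _ ≤ K' * M * (exp (α * |r|) * exp (α * (t - τ))) := by gcongr
      _ ≤ _ := by
        nlinarith [Set.indicator_nonneg (fun _ _ => hM) r (s := {r | τ - t ≤ r})]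
  · have hr : r ∈ {r | τ - t ≤ r} := by simp only [Set.mem_ofPred_eq]; linarith
    rw [Set.indicator_of_mem hr]
    have hdecay_nonneg : 0 ≤ exp (α * |r|) * (K' * M * exp (α * (t - τ))) := by positivity
    linarith [hx1 (t + r)]

theorem bootstrap_exponential_decay_general
    (α τ : ℝ) (hα : 0 < α) (a r : ℤ → ℝ) (ha : ∀ j, 0 ≤ a j)
    (hC : Summable (fun j : ℤ => a j * Real.exp (α * |r j|)))
    (K : ℝ)
    (htail : ∀ T ≥ (0 : ℝ), (∑' j : {j : ℤ // T ≤ r j}, a j.1) ≤ K * Real.exp (-2 * α * T))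
    (M K' : ℝ)
    (x : ℝ → ℂ) (hx1 : ∀ s, ‖x s‖ ≤ M)
    (hx2 : ∀ s ≤ τ, ‖x s‖ ≤ K' * M * Real.exp (α * (s - τ))) :
    ∀ t ≤ τ, (∑' j : ℤ, a j * ‖x (t + r j)‖)
      ≤ ((∑' j : ℤ, a j * Real.exp (α * |r j|)) * K' + K) * M * Real.exp (α * (t - τ)) := by
  intro t ht
  have hM : 0 ≤ M := (norm_nonneg _).trans (hx1 0)
  have hK : 0 ≤ K := by
    simpa using (tsum_nonneg fun j : {j : ℤ // 0 ≤ r j} => ha j).trans (htail 0 le_rfl)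
  have ha_summable : Summable a :=
    hC.of_nonneg_of_le ha fun j => le_mul_of_one_le_right (ha j) (one_le_exp (by positivity))
  have hsplit := tsum_le_of_le_mul_add_indicator {j | τ - t ≤ r j}
    (K' * M * exp (α * (t - τ))) M (fun j => mul_nonneg (ha j) (norm_nonneg _)) ha_summable hC
    fun j => by
      have := mul_le_mul_of_nonneg_left
        (norm_le_exp_abs_mul_add_indicator hα.le hx1 hx2 t (r j)) (ha j)
      simpa only [mul_add, Set.indicator, Set.mem_ofPred_eq, mul_ite, mul_zero, mul_assoc]
        using this
  have htail_t : (∑' j : {j | τ - t ≤ r j}, a j) ≤ K * exp (α * (t - τ)) :=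
    (htail (τ - t) (sub_nonneg.2 ht)).trans <|
      mul_le_mul_of_nonneg_left (exp_le_exp.2 (by nlinarith)) hK
  calc ∑' j, a j * ‖x (t + r j)‖
      ≤ (∑' j, a j * exp (α * |r j|)) * (K' * M * exp (α * (t - τ)))
          + K * exp (α * (t - τ)) * M :=
        hsplit.trans (add_le_add_right (mul_le_mul_of_nonneg_right htail_t hM) _)
    _ = _ := by ring

/-- Bootstrapping estimate: exponential decay of a bounded solution is inherited
by the weighted sums arising in the equation (proof of Theorem 2.2). -/
theorem bootstrap_exponential_decay
    (α τ : ℝ) (hα : 0 < α) (a r : ℤ → ℝ) (ha : ∀ j, 0 ≤ a j)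
    (hC : Summable (fun j : ℤ => a j * Real.exp (α * |r j|)))
    (K : ℝ) (hK : 0 < K)
    (htail : ∀ T ≥ (0 : ℝ), (∑' j : {j : ℤ // T ≤ r j}, a j.1) ≤ K * Real.exp (-2 * α * T))
    (M K' : ℝ) (hM : 0 ≤ M) (hK' : 0 ≤ K')
    (x : ℝ → ℂ) (hx1 : ∀ s, ‖x s‖ ≤ M)
    (hx2 : ∀ s ≤ τ, ‖x s‖ ≤ K' * M * Real.exp (α * (s - τ))) :
    ∀ t ≤ τ, (∑' j : ℤ, a j * ‖x (t + r j)‖)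
      ≤ ((∑' j : ℤ, a j * Real.exp (α * |r j|)) * K' + K) * M * Real.exp (α * (t - τ)) :=
  bootstrap_exponential_decay_general α τ hα a r ha hC K htail M K' x hx1 hx2
end

section
/- Let r : ℤ → ℝ, τ ∈ ℝ, and for each j ∈ ℤ let A_j : ℝ → ℂ be continuous and bounded, with ∑_j (sup_t |A_j(t)|)·|r_j| < ∞. For bounded continuous ψ, φ : ℝ → ℂ define ⟨ψ,φ⟩_τ = conj(ψ(0))·φ(0) − ∑_{j∈ℤ} ∫_0^{r_j} conj(ψ(s−r_j))·A_j(τ+s−r_j)·φ(s) ds, and define the adjoint pairing ⟨φ,ψ⟩^{adj}_τ = conj(φ(0))·ψ(0) + ∑_{j∈ℤ} ∫_0^{−r_j} conj(φ(s+r_j))·conj(A_j(τ+s))·ψ(s) ds. Then conj( ⟨φ,ψ⟩^{adj}_τ ) = ⟨ψ,φ⟩_τ. -/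
open intervalIntegral ComplexConjugate

theorem intervalIntegral.integral_zero_neg_eq_neg_integral_comp_sub {E : Type*}
    [NormedAddCommGroup E] [NormedSpace ℝ E] (g : ℝ → E) (c : ℝ) :
    ∫ s in (0 : ℝ)..-c, g s = -∫ u in (0 : ℝ)..c, g (u - c) := by
  rw [integral_comp_sub_right, integral_symm, sub_self, zero_sub]

theorem conj_integral_adjoint_delay_term (φ ψ A : ℝ → ℂ) (τ c : ℝ) :
    conj (∫ s in (0 : ℝ)..-c, conj (φ (s + c)) * conj (A (τ + s)) * ψ s)
      = -∫ s in (0 : ℝ)..c, conj (ψ (s - c)) * A (τ + s - c) * φ s := by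
  rw [← intervalIntegral_conj, integral_zero_neg_eq_neg_integral_comp_sub]
  congr 1
  refine integral_congr fun s _ => ?_
  simp only [map_mul, Complex.conj_conj, sub_add_cancel, add_sub_assoc]
  ring

theorem hale_inner_product_adjoint_general
    (r : ℤ → ℝ) (τ : ℝ) (A : ℤ → ℝ → ℂ)
    (ψ φ : ℝ → ℂ) :
    (starRingEnd ℂ)
        ((starRingEnd ℂ) (φ 0) * ψ 0
          + ∑' j : ℤ, ∫ s in (0 : ℝ)..(-(r j)),
              (starRingEnd ℂ) (φ (s + r j)) * (starRingEnd ℂ) (A j (τ + s)) * ψ s)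
      = (starRingEnd ℂ) (ψ 0) * φ 0
          - ∑' j : ℤ, ∫ s in (0 : ℝ)..(r j),
              (starRingEnd ℂ) (ψ (s - r j)) * A j (τ + s - r j) * φ s := by
  rw [map_add, map_mul, Complex.conj_conj, Complex.conj_tsum]
  simp only [conj_integral_adjoint_delay_term, tsum_neg]
  ring

/-- The Hale inner product of the adjoint system is the conjugate of the Hale
inner product of the original system (scalar version of Lemma 6.14). -/
theorem hale_inner_product_adjoint
    (r : ℤ → ℝ) (τ : ℝ) (A : ℤ → ℝ → ℂ) (a : ℤ → ℝ)
    (hAc : ∀ j, Continuous (A j)) (hAb : ∀ j t, ‖A j t‖ ≤ a j)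
    (hsum : Summable (fun j : ℤ => a j * |r j|))
    (ψ φ : ℝ → ℂ) (hψc : Continuous ψ) (hφc : Continuous φ)
    (hψb : ∃ B, ∀ s, ‖ψ s‖ ≤ B) (hφb : ∃ B, ∀ s, ‖φ s‖ ≤ B) :
    (starRingEnd ℂ)
        ((starRingEnd ℂ) (φ 0) * ψ 0
          + ∑' j : ℤ, ∫ s in (0 : ℝ)..(-(r j)),
              (starRingEnd ℂ) (φ (s + r j)) * (starRingEnd ℂ) (A j (τ + s)) * ψ s)
      = (starRingEnd ℂ) (ψ 0) * φ 0
          - ∑' j : ℤ, ∫ s in (0 : ℝ)..(r j),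
              (starRingEnd ℂ) (ψ (s - r j)) * A j (τ + s - r j) * φ s :=
  hale_inner_product_adjoint_general r τ A ψ φ
end
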